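/- Let A = Π_Q be the preprojective algebra of an ADE quiver Q, and consider the first period C_5 → C_4 → C_3 → C_2 → C_1 → C_0 → 0 of the Hochschild homology complex obtained by applying -⊗_{A^e}A to the Schofield resolution, with terms C_0 = A^R, C_1 = (V⊗_R A)^R, C_2 = A^R[2], C_3 = 𝔑^R[h], C_4 = (V⊗_R 𝔑)^R[h], C_5 = 𝔑^R[h+2] and differentials d_1'(a⊗b) = [a,b], d_2'(x) = -Σ_{a∈Q̄} ε_a a*⊗[a,x], d_3'(x) = Σ_i x_i x η(x_i*), d_4'(a⊗b) = ab - bη(a), d_5'(x) = Σ_{a∈Q̄} ε_a a*⊗(xη(a) - ax). Under the identifications A = 𝔑*[h-2], 𝔑 = A*[h-2] (via x ↦ (-,x)) and V⊗_R A = (V⊗_R 𝔑)*[h], V⊗_R 𝔑 = (V⊗_R A)*[h] induced by the pairing (a⊗x_a, b⊗x_b) = δ_{a,b*} ε_a (x_a, x_b), one has C_i* = C_{5-i} and the complex is self-dual up to sign: (d_1')* = d_5', (d_2')* = -d_4', and (d_3')* = d_3'. -/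

import Mathlib

open scoped BigOperators

section QuiverShape

variable (I E : Type) [Fintype I] [DecidableEq I] [Fintype E]

/-- The adjacency matrix of the double quiver `Q̄` (equivalently, of the underlying
graph of the quiver with arrow set `E`): the `(i,j)` entry is the number of arrows
between `i` and `j` in `Q̄`. -/
def adjMatrix (src tgt : E → I) : Matrix I I ℤ := fun i j =>
  ((Finset.univ.filter fun a => src a = i ∧ tgt a = j).card : ℤ) +
  ((Finset.univ.filter fun a => src a = j ∧ tgt a = i).card : ℤ)

/-- The quiver with vertex set `I`, arrow set `E` and endpoint maps `src`, `tgt` is of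
ADE type: its underlying graph is connected and the symmetrized Cartan matrix
`2·1 - C` is positive definite (for a connected graph this holds if and only if it is
a simply-laced Dynkin diagram, i.e. of type Aₙ, Dₙ, E₆, E₇ or E₈). -/
def IsADEShape (src tgt : E → I) : Prop :=
  (∀ i j : I, Relation.ReflTransGen
      (fun u v => ∃ a, (src a = u ∧ tgt a = v) ∨ (src a = v ∧ tgt a = u)) i j) ∧
  ((2 : ℝ) • (1 : Matrix I I ℝ) -
      (adjMatrix I E src tgt).map (Int.cast : ℤ → ℝ)).PosDef

/-- The source map of the double quiver `Q̄ = Q ∪ Q*`: an arrow of `Q̄` is either an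
arrow `a ∈ Q` (`Sum.inl a`) or a reversed arrow `a* ∈ Q*` (`Sum.inr a`). -/
def dblSrc (src tgt : E → I) : E ⊕ E → I := Sum.elim src tgt

/-- The target map of the double quiver `Q̄ = Q ∪ Q*`. -/
def dblTgt (src tgt : E → I) : E ⊕ E → I := Sum.elim tgt src

/-- The defining relations of the (deformed) preprojective algebra
`A_λ = ℂQ̄/(∑_{a ∈ Q} [a,a*] - ∑_i λ_i e_i)` as a quotient of the free algebra on the
trivial paths `e_i` and the arrows of the double quiver: the `e_i` are orthogonal
idempotents summing to `1`, arrows compose according to their endpoints, and the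
(deformed) preprojective relation holds.  For `λ = 0` this presents `Π_Q`. -/
inductive PathRel (src tgt : E → I) (lam : I → ℂ) :
    FreeAlgebra ℂ (I ⊕ (E ⊕ E)) → FreeAlgebra ℂ (I ⊕ (E ⊕ E)) → Prop
  | vertex_mul (i j : I) :
      PathRel src tgt lam
        (FreeAlgebra.ι ℂ (Sum.inl i : I ⊕ (E ⊕ E)) * FreeAlgebra.ι ℂ (Sum.inl j))
        (if i = j then FreeAlgebra.ι ℂ (Sum.inl i : I ⊕ (E ⊕ E)) else 0)
  | sum_vertices :
      PathRel src tgt lam (∑ i : I, FreeAlgebra.ι ℂ (Sum.inl i : I ⊕ (E ⊕ E))) 1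
  | arr_src (x : E ⊕ E) :
      PathRel src tgt lam
        (FreeAlgebra.ι ℂ (Sum.inr x : I ⊕ (E ⊕ E)) *
          FreeAlgebra.ι ℂ (Sum.inl (dblSrc I E src tgt x)))
        (FreeAlgebra.ι ℂ (Sum.inr x : I ⊕ (E ⊕ E)))
  | arr_tgt (x : E ⊕ E) :
      PathRel src tgt lam
        (FreeAlgebra.ι ℂ (Sum.inl (dblTgt I E src tgt x) : I ⊕ (E ⊕ E)) *
          FreeAlgebra.ι ℂ (Sum.inr x))
        (FreeAlgebra.ι ℂ (Sum.inr x : I ⊕ (E ⊕ E)))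
  | preproj :
      PathRel src tgt lam
        (∑ a : E,
          (FreeAlgebra.ι ℂ (Sum.inr (Sum.inl a) : I ⊕ (E ⊕ E)) *
              FreeAlgebra.ι ℂ (Sum.inr (Sum.inr a)) -
            FreeAlgebra.ι ℂ (Sum.inr (Sum.inr a) : I ⊕ (E ⊕ E)) *
              FreeAlgebra.ι ℂ (Sum.inr (Sum.inl a))))
        (∑ i : I, lam i • FreeAlgebra.ι ℂ (Sum.inl i : I ⊕ (E ⊕ E)))

end QuiverShape

/-- The preprojective algebra `A = Π_Q` of a quiver `Q`, presented as the quotient of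
the path algebra `ℂQ̄` of the double quiver by the preprojective relation
`∑_{a ∈ Q} [a, a*] = 0` (field `pres`), together with the images `e i` of the trivial
paths and `arr x` of the arrows of `Q̄`, its Frobenius form `f` with Nakayama
automorphism `η` (`f` exists whenever `Q` is of Dynkin type), and a basis `bas` of `A`
with dual basis `dbas` with respect to the Frobenius form `(x, y) = f (x * y)`. -/
structure PreprojectiveAlgebra where
  I : Type
  [fintypeI : Fintype I]
  [decEqI : DecidableEq I]
  E : Type
  [fintypeE : Fintype E]
  [decEqE : DecidableEq E]
  src : E → I
  tgt : E → I
  A : Type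
  [ringA : Ring A]
  [algA : Algebra ℂ A]
  [fdA : FiniteDimensional ℂ A]
  e : I → A
  arr : E ⊕ E → A
  idem : ∀ i, e i * e i = e i
  orth : ∀ i j, i ≠ j → e i * e j = 0
  sum_e : ∑ i, e i = 1
  arr_e : ∀ x : E ⊕ E, arr x * e (dblSrc I E src tgt x) = arr x
  e_arr : ∀ x : E ⊕ E, e (dblTgt I E src tgt x) * arr x = arr x
  preproj :
    ∑ a : E, (arr (Sum.inl a) * arr (Sum.inr a) - arr (Sum.inr a) * arr (Sum.inl a)) = 0
  pres : ∃ iso : RingQuot (PathRel I E src tgt fun _ => 0) ≃ₐ[ℂ] A,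
    (∀ i, iso (RingQuot.mkAlgHom ℂ (PathRel I E src tgt fun _ => 0)
        (FreeAlgebra.ι ℂ (Sum.inl i))) = e i) ∧
    (∀ x, iso (RingQuot.mkAlgHom ℂ (PathRel I E src tgt fun _ => 0)
        (FreeAlgebra.ι ℂ (Sum.inr x))) = arr x)
  f : A →ₗ[ℂ] ℂ
  nondeg₁ : ∀ x : A, x ≠ 0 → ∃ y, f (x * y) ≠ 0
  nondeg₂ : ∀ y : A, y ≠ 0 → ∃ x, f (x * y) ≠ 0
  eta : A ≃ₐ[ℂ] A
  nakayama : ∀ x y, f (x * y) = f (y * eta x)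
  eta_invol : ∀ x, eta (eta x) = x
  dimA : ℕ
  bas : Fin dimA → A
  dbas : Fin dimA → A
  bas_span : Submodule.span ℂ (Set.range bas) = ⊤
  dual : ∀ i j, f (bas i * dbas j) = if i = j then 1 else 0

attribute [instance] PreprojectiveAlgebra.fintypeI PreprojectiveAlgebra.decEqI
  PreprojectiveAlgebra.fintypeE PreprojectiveAlgebra.decEqE PreprojectiveAlgebra.ringA PreprojectiveAlgebra.algA
  PreprojectiveAlgebra.fdA

namespace PreprojectiveAlgebra

variable (P : PreprojectiveAlgebra)

/-- `Q` is of ADE type. -/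
def IsADE : Prop := IsADEShape P.I P.E P.src P.tgt

/-- the source of an arrow of the double quiver -/
def dsrc : P.E ⊕ P.E → P.I := dblSrc P.I P.E P.src P.tgt

/-- the target of an arrow of the double quiver -/
def dtgt : P.E ⊕ P.E → P.I := dblTgt P.I P.E P.src P.tgt

/-- the involution `a ↦ a*` of the arrows of the double quiver -/
def star : P.E ⊕ P.E → P.E ⊕ P.E := Sum.elim Sum.inr Sum.inl

/-- `ε_a = 1` for `a ∈ Q`, `ε_a = -1` for `a ∈ Q*` -/
def eps : P.E ⊕ P.E → ℂ := Sum.elim (fun _ => 1) fun _ => -1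

end PreprojectiveAlgebra

namespace PreprojectiveAlgebra

variable (P : PreprojectiveAlgebra)

/-- `A^R`, the `R`-invariants of `A`: elements commuting with all `e_i`
(`A^R = ⊕_i e_i A e_i`).  This is `C₀ = C₂` (up to degree shift) of the Hochschild
homology complex. -/
noncomputable def AR : Submodule ℂ P.A :=
  ⨅ i : P.I, LinearMap.ker (LinearMap.mulLeft ℂ (P.e i) - LinearMap.mulRight ℂ (P.e i))

/-- `𝔑^R`, the `R`-invariants of the twisted bimodule `𝔑` (which is `A` as a vector
space, with right action twisted by the Nakayama automorphism `η`):
elements with `e_i x = x η(e_i)` for all `i`.  This is `C₃ = C₅` (up to degree shift)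
of the Hochschild homology complex. -/
noncomputable def NR : Submodule ℂ P.A :=
  ⨅ i : P.I, LinearMap.ker
    (LinearMap.mulLeft ℂ (P.e i) - LinearMap.mulRight ℂ (P.eta (P.e i)))

/-- `(V ⊗_R A)^R`, realized as the functions `g` on the arrows of `Q̄` with
`g b ∈ e_{src b}·A·e_{tgt b}` (the element `∑_b b ⊗ g b`).  This is `C₁` of the
Hochschild homology complex. -/
noncomputable def VAR : Submodule ℂ (P.E ⊕ P.E → P.A) :=
  ⨅ b : P.E ⊕ P.E, LinearMap.ker
    ((((LinearMap.mulLeft ℂ (P.e (P.dsrc b))) ∘ₗ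
        (LinearMap.mulRight ℂ (P.e (P.dtgt b)))) - LinearMap.id) ∘ₗ LinearMap.proj b)

/-- `(V ⊗_R 𝔑)^R`, realized as the functions `g` on the arrows of `Q̄` with
`g b ∈ e_{src b}·A·η(e_{tgt b})`.  This is `C₄` of the Hochschild homology complex. -/
noncomputable def VNR : Submodule ℂ (P.E ⊕ P.E → P.A) :=
  ⨅ b : P.E ⊕ P.E, LinearMap.ker
    ((((LinearMap.mulLeft ℂ (P.e (P.dsrc b))) ∘ₗ
        (LinearMap.mulRight ℂ (P.eta (P.e (P.dtgt b))))) - LinearMap.id) ∘ₗ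
      LinearMap.proj b)

/-- the Frobenius pairing `(x, y) = f (x y)` on `A` (which identifies `A = 𝔑*[h-2]`
and `𝔑 = A*[h-2]`) -/
noncomputable def pairA (x y : P.A) : ℂ := P.f (x * y)

/-- the pairing `(a ⊗ x_a, b ⊗ x_b) = δ_{a,b*} ε_a (x_a, x_b)` on `V ⊗ A` resp.
`V ⊗ 𝔑` (which identifies `V ⊗_R A = (V ⊗_R 𝔑)*[h]` and `V ⊗_R 𝔑 = (V ⊗_R A)*[h]`);
an element `∑_a a ⊗ x_a` is recorded as the function `a ↦ x_a`. -/
noncomputable def pairV (g g' : P.E ⊕ P.E → P.A) : ℂ :=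
  ∑ b : P.E ⊕ P.E, P.eps b * P.f (g b * g' (P.star b))

end PreprojectiveAlgebra

open PreprojectiveAlgebra

/-!
STATEMENT 5 (self-duality of the Hochschild homology complex): let `A = Π_Q` be the
preprojective algebra of an ADE quiver `Q` and consider the first period
`C₅ → C₄ → C₃ → C₂ → C₁ → C₀ → 0` of the Hochschild homology complex obtained by
applying `- ⊗_{Aᵉ} A` to the Schofield resolution, with terms `C₀ = A^R`,
`C₁ = (V ⊗_R A)^R`, `C₂ = A^R[2]`, `C₃ = 𝔑^R[h]`, `C₄ = (V ⊗_R 𝔑)^R[h]`,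
`C₅ = 𝔑^R[h+2]` and differentials
`d₁'(a ⊗ b) = [a, b]`, `d₂'(x) = -∑_{a ∈ Q̄} ε_a a* ⊗ [a, x]`,
`d₃'(x) = ∑_i x_i x η(x_i*)`, `d₄'(a ⊗ b) = a b - b η(a)`,
`d₅'(x) = ∑_{a ∈ Q̄} ε_a a* ⊗ (x η(a) - a x)`.
Under the identifications `A = 𝔑*[h-2]`, `𝔑 = A*[h-2]` (via `x ↦ (-, x)`) and
`V ⊗_R A = (V ⊗_R 𝔑)*[h]`, `V ⊗_R 𝔑 = (V ⊗_R A)*[h]` induced by the pairing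
`(a ⊗ x_a, b ⊗ x_b) = δ_{a,b*} ε_a (x_a, x_b)`, one has `Cᵢ* = C₅₋ᵢ` and the complex
is self-dual up to sign: `(d₁')* = d₅'`, `(d₂')* = -d₄'`, `(d₃')* = d₃'`.

The differentials are taken as parameters (`d1'`, …, `d5'`), pinned down uniquely by
the specification hypotheses `hd1`, …, `hd5` which record the above formulas (elements
of `(V ⊗_R M)^R` of the form `∑_a a ⊗ x_a` are recorded as functions `a ↦ x_a`; in
the component formulas the sums over `a ∈ Q̄` reduce to the single term `a = b*` of the
`b`-component).  The statement `Cᵢ* = C₅₋ᵢ` is rendered as the (perfect) nondegeneracy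
of the pairings `C₀ × C₅ → ℂ`, `C₁ × C₄ → ℂ`, `C₂ × C₃ → ℂ`, and the self-duality as
the adjointness identities for the differentials with respect to these pairings.
(The internal degree shifts `[·]` do not affect these statements and are omitted.)
-/
namespace PreprojectiveAlgebra

variable (P : PreprojectiveAlgebra)

lemma f_eta (x : P.A) : P.f (P.eta x) = P.f x := by
  have h := P.nakayama x 1
  simp only [mul_one, one_mul] at h
  exact h.symm

lemma f_mul_eta (a u : P.A) : P.f (u * P.eta a) = P.f (a * u) :=
  (P.nakayama a u).symm

lemma star_star (b : P.E ⊕ P.E) : P.star (P.star b) = b := by cases b <;> rfl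

lemma star_injective : Function.Injective P.star := by
  intro a b h
  have := congrArg P.star h
  rwa [P.star_star, P.star_star] at this

lemma star_bijective : Function.Bijective P.star :=
  ⟨P.star_injective, fun b => ⟨P.star b, P.star_star b⟩⟩

lemma eps_sq (b : P.E ⊕ P.E) : P.eps b * P.eps b = 1 := by
  cases b <;> simp [eps]

lemma eps_star (b : P.E ⊕ P.E) : P.eps (P.star b) = -P.eps b := by
  cases b <;> simp [eps, star]

lemma eps_ne_zero (b : P.E ⊕ P.E) : P.eps b ≠ 0 := by
  cases b <;> simp [eps]

lemma dsrc_star (b : P.E ⊕ P.E) : P.dsrc (P.star b) = P.dtgt b := by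
  cases b <;> rfl

lemma dtgt_star (b : P.E ⊕ P.E) : P.dtgt (P.star b) = P.dsrc b := by
  cases b <;> rfl

lemma eta_e_mul (i j : P.I) :
    P.eta (P.e i) * P.eta (P.e j) = if i = j then P.eta (P.e i) else 0 := by
  rw [← map_mul]
  by_cases h : i = j
  · subst h; rw [P.idem, if_pos rfl]
  · rw [P.orth i j h, if_neg h, map_zero]

lemma e_mul_e (i j : P.I) : P.e i * P.e j = if i = j then P.e i else 0 := by
  by_cases h : i = j
  · subst h; rw [P.idem, if_pos rfl]
  · rw [P.orth i j h, if_neg h]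

lemma mem_AR_iff {x : P.A} : x ∈ P.AR ↔ ∀ i, P.e i * x = x * P.e i := by
  simp [AR, Submodule.mem_iInf, LinearMap.mem_ker, sub_eq_zero]

lemma mem_NR_iff {x : P.A} : x ∈ P.NR ↔ ∀ i, P.e i * x = x * P.eta (P.e i) := by
  simp [NR, Submodule.mem_iInf, LinearMap.mem_ker, sub_eq_zero]

lemma mem_VAR_iff {g : P.E ⊕ P.E → P.A} :
    g ∈ P.VAR ↔ ∀ b, P.e (P.dsrc b) * (g b * P.e (P.dtgt b)) = g b := by
  simp [VAR, Submodule.mem_iInf, LinearMap.mem_ker, sub_eq_zero]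

lemma mem_VNR_iff {g : P.E ⊕ P.E → P.A} :
    g ∈ P.VNR ↔ ∀ b, P.e (P.dsrc b) * (g b * P.eta (P.e (P.dtgt b))) = g b := by
  simp [VNR, Submodule.mem_iInf, LinearMap.mem_ker, sub_eq_zero]

end PreprojectiveAlgebra
namespace PreprojectiveAlgebra

variable (P : PreprojectiveAlgebra)

lemma expand_bas (z : P.A) : ∑ j, P.f (z * P.dbas j) • P.bas j = z := by
  have hmap : (∑ j, ((P.f ∘ₗ LinearMap.mulRight ℂ (P.dbas j)).smulRight (P.bas j)))
      = LinearMap.id (R := ℂ) (M := P.A) := by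
    apply LinearMap.ext_on P.bas_span
    rintro x ⟨i, rfl⟩
    simp [LinearMap.sum_apply, P.dual, ite_smul]
  have := congrFun (congrArg (fun (φ : P.A →ₗ[ℂ] P.A) => (φ : P.A → P.A)) hmap) z
  simpa [LinearMap.sum_apply] using this

lemma expand_dbas (z : P.A) : ∑ j, P.f (P.bas j * z) • P.dbas j = z := by
  set w := z - ∑ j, P.f (P.bas j * z) • P.dbas j with hw
  have hbas : ∀ i, P.f (P.bas i * w) = 0 := by
    intro i
    simp only [hw, mul_sub, map_sub, Finset.mul_sum, map_sum, mul_smul_comm, map_smul,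
      smul_eq_mul, P.dual]
    simp
  have hall : ∀ u : P.A, P.f (u * w) = 0 := by
    have : (P.f ∘ₗ LinearMap.mulRight ℂ w) = 0 := by
      apply LinearMap.ext_on P.bas_span
      rintro x ⟨i, rfl⟩
      simpa using hbas i
    intro u
    have := congrFun (congrArg (fun (φ : P.A →ₗ[ℂ] ℂ) => (φ : P.A → ℂ)) this) u
    simpa using this
  have hw0 : w = 0 := by
    by_contra h
    obtain ⟨x, hx⟩ := P.nondeg₂ w h
    exact hx (hall x)
  have := sub_eq_zero.mp hw0
  exact this.symm

lemma dual_eta (i j : Fin P.dimA) :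
    P.f (P.dbas i * P.eta (P.bas j)) = if i = j then 1 else 0 := by
  rw [P.f_mul_eta, P.dual]
  by_cases h : i = j
  · simp [h]
  · simp [h, Ne.symm h]

lemma swap_sum (B : P.A →ₗ[ℂ] P.A →ₗ[ℂ] ℂ) (v w : Fin P.dimA → P.A)
    (hvw : ∀ i j, P.f (v i * w j) = if i = j then 1 else 0) :
    ∑ i, B (v i) (w i) = ∑ j, B (P.bas j) (P.dbas j) := by
  classical
  set C : Matrix (Fin P.dimA) (Fin P.dimA) ℂ := fun i j => P.f (v i * P.dbas j) with hC
  set D : Matrix (Fin P.dimA) (Fin P.dimA) ℂ := fun i k => P.f (P.bas k * w i) with hD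
  have hCD : C * D.transpose = 1 := by
    ext i l
    have hwl := P.expand_dbas (w l)
    have : P.f (v i * w l) = ∑ k, P.f (P.bas k * w l) * P.f (v i * P.dbas k) := by
      conv_lhs => rw [← hwl]
      simp [Finset.mul_sum, mul_smul_comm, mul_comm]
    rw [Matrix.mul_apply]
    simp only [Matrix.transpose_apply, hC, hD]
    rw [Matrix.one_apply]
    rw [← hvw i l, this]
    exact Finset.sum_congr rfl fun k _ => mul_comm _ _
  have hDC : D.transpose * C = 1 := mul_eq_one_comm.mp hCD
  have hDCe : ∀ j k, (∑ i, P.f (P.bas k * w i) * P.f (v i * P.dbas j)) =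
      if k = j then 1 else 0 := by
    intro j k
    have := congrFun (congrFun hDC k) j
    rw [Matrix.mul_apply] at this
    simp only [Matrix.transpose_apply, hC, hD] at this
    rw [Matrix.one_apply] at this
    exact this
  calc ∑ i, B (v i) (w i)
      = ∑ i, B (∑ j, P.f (v i * P.dbas j) • P.bas j) (∑ k, P.f (P.bas k * w i) • P.dbas k) := by
        refine Finset.sum_congr rfl fun i _ => ?_
        rw [P.expand_bas (v i), P.expand_dbas (w i)]
    _ = ∑ i, ∑ j, ∑ k, (P.f (v i * P.dbas j) * P.f (P.bas k * w i)) *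
          B (P.bas j) (P.dbas k) := by
        refine Finset.sum_congr rfl fun i _ => ?_
        simp only [map_sum, LinearMap.sum_apply, map_smul, LinearMap.smul_apply,
          smul_eq_mul, Finset.mul_sum, mul_assoc]
        rw [Finset.sum_comm]
        exact Finset.sum_congr rfl fun j _ => Finset.sum_congr rfl fun k _ => by ring
    _ = ∑ j, ∑ k, (∑ i, P.f (P.bas k * w i) * P.f (v i * P.dbas j)) *
          B (P.bas j) (P.dbas k) := by
        rw [Finset.sum_comm]
        refine Finset.sum_congr rfl fun j _ => ?_
        rw [Finset.sum_comm]
        refine Finset.sum_congr rfl fun k _ => ?_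
        rw [Finset.sum_mul]
        exact Finset.sum_congr rfl fun i _ => by ring
    _ = ∑ j, B (P.bas j) (P.dbas j) := by
        refine Finset.sum_congr rfl fun j _ => ?_
        rw [Finset.sum_eq_single j]
        · rw [hDCe j j, if_pos rfl, one_mul]
        · intro k _ hk
          rw [hDCe j k, if_neg hk, zero_mul]
        · intro h; exact absurd (Finset.mem_univ j) h

end PreprojectiveAlgebra
namespace PreprojectiveAlgebra

variable (P : PreprojectiveAlgebra)

lemma eta_e_idem (i : P.I) : P.eta (P.e i) * P.eta (P.e i) = P.eta (P.e i) := by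
  rw [← map_mul, P.idem]

lemma nondegAN (x : P.A) (hx : x ∈ P.AR) (hx0 : x ≠ 0) :
    ∃ y ∈ P.NR, P.f (x * y) ≠ 0 := by
  obtain ⟨y, hy⟩ := P.nondeg₁ x hx0
  refine ⟨∑ i, P.e i * (y * P.eta (P.e i)), ?_, ?_⟩
  · rw [P.mem_NR_iff]
    intro j
    rw [Finset.mul_sum, Finset.sum_mul]
    refine Finset.sum_congr rfl fun i _ => ?_
    rw [← mul_assoc, P.e_mul_e, mul_assoc, mul_assoc, P.eta_e_mul]
    by_cases h : i = j
    · subst h; simp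
    · simp [h, Ne.symm h]
  · have step : ∀ i, P.f (x * (P.e i * (y * P.eta (P.e i)))) = P.f (x * (P.e i * y)) := by
      intro i
      have hcom := (P.mem_AR_iff.mp hx) i
      have h1 : x * (P.e i * (y * P.eta (P.e i))) = (x * (P.e i * y)) * P.eta (P.e i) := by
        simp only [mul_assoc]
      rw [h1, P.f_mul_eta]
      have h2 : P.e i * (x * (P.e i * y)) = x * (P.e i * y) := by
        rw [← mul_assoc, hcom, mul_assoc, ← mul_assoc (P.e i), P.idem]
      rw [h2]
    rw [Finset.mul_sum, map_sum, Finset.sum_congr rfl fun i _ => step i, ← map_sum]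
    have h3 : ∑ i, x * (P.e i * y) = x * y := by
      rw [← Finset.mul_sum, ← Finset.sum_mul, P.sum_e, one_mul]
    rwa [h3]

lemma nondegNA (y : P.A) (hy : y ∈ P.NR) (hy0 : y ≠ 0) :
    ∃ x ∈ P.AR, P.f (x * y) ≠ 0 := by
  obtain ⟨x, hx⟩ := P.nondeg₂ y hy0
  refine ⟨∑ i, P.e i * (x * P.e i), ?_, ?_⟩
  · rw [P.mem_AR_iff]
    intro j
    rw [Finset.mul_sum, Finset.sum_mul]
    refine Finset.sum_congr rfl fun i _ => ?_
    rw [← mul_assoc, P.e_mul_e, mul_assoc, mul_assoc, P.e_mul_e]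
    by_cases h : i = j
    · subst h; simp
    · simp [h, Ne.symm h]
  · have step : ∀ i, P.f ((P.e i * (x * P.e i)) * y) = P.f (P.e i * (x * y)) := by
      intro i
      have hyi := (P.mem_NR_iff.mp hy) i
      have h1 : (P.e i * (x * P.e i)) * y = (P.e i * (x * y)) * P.eta (P.e i) := by
        simp only [mul_assoc]
        rw [hyi]
      rw [h1, P.f_mul_eta, ← mul_assoc, P.idem]
    rw [Finset.sum_mul, map_sum, Finset.sum_congr rfl fun i _ => step i, ← map_sum]
    have h3 : ∑ i, P.e i * (x * y) = x * y := by
      rw [← Finset.sum_mul, P.sum_e, one_mul]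
    rwa [h3]

lemma nondegV1 (g : P.E ⊕ P.E → P.A) (hg : g ∈ P.VAR) (b₀ : P.E ⊕ P.E)
    (hb₀ : g b₀ ≠ 0) : ∃ g' ∈ P.VNR, P.pairV g g' ≠ 0 := by
  classical
  obtain ⟨y, hy⟩ := P.nondeg₁ (g b₀) hb₀
  refine ⟨fun c => if c = P.star b₀ then
      P.e (P.dsrc c) * (y * P.eta (P.e (P.dtgt c))) else 0, ?_, ?_⟩
  · rw [P.mem_VNR_iff]
    intro c
    by_cases hc : c = P.star b₀
    · rw [if_pos hc]
      rw [← mul_assoc, ← mul_assoc, P.idem, mul_assoc, mul_assoc, P.eta_e_idem]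
    · rw [if_neg hc]
      simp
  · have hm := (P.mem_VAR_iff.mp hg) b₀
    have hgt : g b₀ * P.e (P.dtgt b₀) = g b₀ := by
      conv_lhs => rw [← hm]
      rw [mul_assoc, mul_assoc, P.idem, hm]
    have hgs : P.e (P.dsrc b₀) * g b₀ = g b₀ := by
      conv_lhs => rw [← hm]
      rw [← mul_assoc, P.idem, hm]
    have hval : P.pairV g (fun c => if c = P.star b₀ then
        P.e (P.dsrc c) * (y * P.eta (P.e (P.dtgt c))) else 0) =
        P.eps b₀ * P.f (g b₀ * y) := by
      unfold pairV
      rw [Finset.sum_eq_single b₀]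
      · beta_reduce
        rw [if_pos rfl, P.dsrc_star, P.dtgt_star]
        congr 1
        have h1 : g b₀ * (P.e (P.dtgt b₀) * (y * P.eta (P.e (P.dsrc b₀)))) =
            ((g b₀ * P.e (P.dtgt b₀)) * y) * P.eta (P.e (P.dsrc b₀)) := by
          simp only [mul_assoc]
        rw [h1, hgt, P.f_mul_eta, ← mul_assoc, hgs]
      · intro b _ hb
        beta_reduce
        rw [if_neg (fun h => hb (P.star_injective h)), mul_zero, map_zero, mul_zero]
      · intro h; exact absurd (Finset.mem_univ b₀) h
    rw [hval]
    exact mul_ne_zero (P.eps_ne_zero b₀) hy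

lemma nondegV2 (g' : P.E ⊕ P.E → P.A) (hg' : g' ∈ P.VNR) (b₀ : P.E ⊕ P.E)
    (hb₀ : g' b₀ ≠ 0) : ∃ g ∈ P.VAR, P.pairV g g' ≠ 0 := by
  classical
  obtain ⟨x, hx⟩ := P.nondeg₂ (g' b₀) hb₀
  refine ⟨fun c => if c = P.star b₀ then
      P.e (P.dsrc c) * (x * P.e (P.dtgt c)) else 0, ?_, ?_⟩
  · rw [P.mem_VAR_iff]
    intro c
    by_cases hc : c = P.star b₀
    · rw [if_pos hc]
      rw [← mul_assoc, ← mul_assoc, P.idem, mul_assoc, mul_assoc, P.idem]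
    · rw [if_neg hc]
      simp
  · have hm := (P.mem_VNR_iff.mp hg') b₀
    have hgt : g' b₀ * P.eta (P.e (P.dtgt b₀)) = g' b₀ := by
      conv_lhs => rw [← hm]
      rw [mul_assoc, mul_assoc, P.eta_e_idem, hm]
    have hgs : P.e (P.dsrc b₀) * g' b₀ = g' b₀ := by
      conv_lhs => rw [← hm]
      rw [← mul_assoc, P.idem, hm]
    have hval : P.pairV (fun c => if c = P.star b₀ then
        P.e (P.dsrc c) * (x * P.e (P.dtgt c)) else 0) g' =
        P.eps (P.star b₀) * P.f (x * g' b₀) := by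
      unfold pairV
      rw [Finset.sum_eq_single (P.star b₀)]
      · beta_reduce
        rw [if_pos rfl, P.star_star, P.dsrc_star, P.dtgt_star]
        congr 1
        have h1 : (P.e (P.dtgt b₀) * (x * P.e (P.dsrc b₀))) * g' b₀ =
            P.e (P.dtgt b₀) * (x * (P.e (P.dsrc b₀) * g' b₀)) := by
          simp only [mul_assoc]
        rw [h1, hgs, ← P.f_mul_eta (P.e (P.dtgt b₀)), mul_assoc, hgt]
      · intro b _ hb
        beta_reduce
        rw [if_neg hb, zero_mul, map_zero, mul_zero]
      · intro h; exact absurd (Finset.mem_univ (P.star b₀)) h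
    rw [hval]
    exact mul_ne_zero (P.eps_ne_zero _) hx

end PreprojectiveAlgebra
theorem self_duality_of_hochschild_homology_complex
    (P : PreprojectiveAlgebra) (hADE : P.IsADE)
    (d1' : P.VAR →ₗ[ℂ] P.AR) (d2' : P.AR →ₗ[ℂ] P.VAR)
    (d3' : P.NR →ₗ[ℂ] P.AR) (d4' : P.VNR →ₗ[ℂ] P.NR)
    (d5' : P.NR →ₗ[ℂ] P.VNR)
    (hd1 : ∀ g : P.VAR,
      (d1' g : P.A) = ∑ b : P.E ⊕ P.E, (P.arr b * (g : P.E ⊕ P.E → P.A) b -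
        (g : P.E ⊕ P.E → P.A) b * P.arr b))
    (hd2 : ∀ (x : P.AR) (b : P.E ⊕ P.E),
      (d2' x : P.E ⊕ P.E → P.A) b =
        -P.eps (P.star b) • (P.arr (P.star b) * (x : P.A) - (x : P.A) * P.arr (P.star b)))
    (hd3 : ∀ x : P.NR, (d3' x : P.A) = ∑ j, P.bas j * (x : P.A) * P.eta (P.dbas j))
    (hd4 : ∀ g : P.VNR,
      (d4' g : P.A) = ∑ b : P.E ⊕ P.E, (P.arr b * (g : P.E ⊕ P.E → P.A) b -
        (g : P.E ⊕ P.E → P.A) b * P.eta (P.arr b)))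
    (hd5 : ∀ (x : P.NR) (b : P.E ⊕ P.E),
      (d5' x : P.E ⊕ P.E → P.A) b =
        P.eps (P.star b) • ((x : P.A) * P.eta (P.arr (P.star b)) -
          P.arr (P.star b) * (x : P.A))) :
    -- `C₀* = C₅`, `C₂* = C₃`: the pairing `A^R × 𝔑^R → ℂ` is nondegenerate
    ((∀ x : P.AR, (x : P.A) ≠ 0 → ∃ y : P.NR, P.pairA x y ≠ 0) ∧
     (∀ y : P.NR, (y : P.A) ≠ 0 → ∃ x : P.AR, P.pairA x y ≠ 0)) ∧
    -- `C₁* = C₄`: the pairing `(V ⊗_R A)^R × (V ⊗_R 𝔑)^R → ℂ` is nondegenerate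
    ((∀ g : P.VAR, (g : P.E ⊕ P.E → P.A) ≠ 0 → ∃ g' : P.VNR, P.pairV g g' ≠ 0) ∧
     (∀ g' : P.VNR, (g' : P.E ⊕ P.E → P.A) ≠ 0 → ∃ g : P.VAR, P.pairV g g' ≠ 0)) ∧
    -- `(d₁')* = d₅'`
    (∀ (g : P.VAR) (y : P.NR), P.pairA (d1' g) y = P.pairV g (d5' y)) ∧
    -- `(d₂')* = -d₄'`
    (∀ (x : P.AR) (g : P.VNR), P.pairA x (d4' g) = -P.pairV (d2' x) g) ∧
    -- `(d₃')* = d₃'`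
    (∀ x y : P.NR, P.pairA (x : P.A) (d3' y) = P.pairA (d3' x) (y : P.A)) := by
  refine ⟨⟨?_, ?_⟩, ⟨?_, ?_⟩, ?_, ?_, ?_⟩
  · -- C₀* = C₅
    intro x hx
    obtain ⟨y, hyN, hy⟩ := P.nondegAN (x : P.A) x.2 hx
    exact ⟨⟨y, hyN⟩, hy⟩
  · -- C₂* = C₃
    intro y hy
    obtain ⟨x, hxA, hx⟩ := P.nondegNA (y : P.A) y.2 hy
    exact ⟨⟨x, hxA⟩, hx⟩
  · -- C₁* = C₄
    intro g hg
    obtain ⟨b₀, hb₀⟩ := Function.ne_iff.mp hg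
    obtain ⟨g', hg'N, hgg'⟩ := P.nondegV1 (g : P.E ⊕ P.E → P.A) g.2 b₀ (by simpa using hb₀)
    exact ⟨⟨g', hg'N⟩, hgg'⟩
  · intro g' hg'
    obtain ⟨b₀, hb₀⟩ := Function.ne_iff.mp hg'
    obtain ⟨g, hgA, hgg'⟩ := P.nondegV2 (g' : P.E ⊕ P.E → P.A) g'.2 b₀ (by simpa using hb₀)
    exact ⟨⟨g, hgA⟩, hgg'⟩
  · -- (d₁')* = d₅'
    intro g y
    show P.f ((d1' g : P.A) * (y : P.A)) = P.pairV (g : P.E ⊕ P.E → P.A) (d5' y : P.E ⊕ P.E → P.A)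
    rw [hd1 g, Finset.sum_mul, map_sum]
    unfold PreprojectiveAlgebra.pairV
    refine Finset.sum_congr rfl fun b _ => ?_
    rw [hd5 y (P.star b), P.star_star]
    rw [mul_smul_comm, map_smul, smul_eq_mul, ← mul_assoc, P.eps_sq, one_mul]
    have key : P.f ((g : P.E ⊕ P.E → P.A) b * ((y : P.A) * P.eta (P.arr b))) =
        P.f (P.arr b * ((g : P.E ⊕ P.E → P.A) b * (y : P.A))) := by
      rw [← mul_assoc]
      exact P.f_mul_eta _ _
    simp only [sub_mul, mul_sub, map_sub, mul_assoc]
    rw [key]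
  · -- (d₂')* = -d₄'
    intro x g
    show P.f ((x : P.A) * (d4' g : P.A)) = -P.pairV (d2' x : P.E ⊕ P.E → P.A) (g : P.E ⊕ P.E → P.A)
    rw [hd4 g, Finset.mul_sum, map_sum]
    have hR : P.pairV (d2' x : P.E ⊕ P.E → P.A) (g : P.E ⊕ P.E → P.A) =
        ∑ b : P.E ⊕ P.E, P.f ((P.arr b * (x : P.A) - (x : P.A) * P.arr b) *
          (g : P.E ⊕ P.E → P.A) b) := by
      unfold PreprojectiveAlgebra.pairV
      calc ∑ b : P.E ⊕ P.E, P.eps b * P.f ((d2' x : P.E ⊕ P.E → P.A) b *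
              (g : P.E ⊕ P.E → P.A) (P.star b))
          = ∑ b : P.E ⊕ P.E, P.f ((P.arr (P.star b) * (x : P.A) -
              (x : P.A) * P.arr (P.star b)) * (g : P.E ⊕ P.E → P.A) (P.star b)) := by
            refine Finset.sum_congr rfl fun b _ => ?_
            rw [hd2 x b, smul_mul_assoc, map_smul, smul_eq_mul, P.eps_star, neg_neg,
              ← mul_assoc, P.eps_sq, one_mul]
        _ = ∑ b : P.E ⊕ P.E, P.f ((P.arr b * (x : P.A) - (x : P.A) * P.arr b) *
              (g : P.E ⊕ P.E → P.A) b) := by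
            exact Fintype.sum_bijective P.star P.star_bijective
              (fun b => P.f ((P.arr (P.star b) * (x : P.A) - (x : P.A) * P.arr (P.star b)) *
                (g : P.E ⊕ P.E → P.A) (P.star b)))
              (fun b => P.f ((P.arr b * (x : P.A) - (x : P.A) * P.arr b) *
                (g : P.E ⊕ P.E → P.A) b))
              (fun b => rfl)
    rw [hR, ← Finset.sum_neg_distrib]
    refine Finset.sum_congr rfl fun b _ => ?_
    have key : P.f ((x : P.A) * ((g : P.E ⊕ P.E → P.A) b * P.eta (P.arr b))) =
        P.f (P.arr b * ((x : P.A) * (g : P.E ⊕ P.E → P.A) b)) := by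
      rw [← mul_assoc]
      exact P.f_mul_eta _ _
    simp only [mul_sub, sub_mul, map_sub, mul_assoc]
    rw [key]
    ring
  · -- (d₃')* = d₃'
    intro x y
    show P.f ((x : P.A) * (d3' y : P.A)) = P.f ((d3' x : P.A) * (y : P.A))
    rw [hd3 x, hd3 y, Finset.mul_sum, Finset.sum_mul, map_sum, map_sum]
    set B : P.A →ₗ[ℂ] P.A →ₗ[ℂ] ℂ := LinearMap.mk₂ ℂ
        (fun p q => P.f (p * ((x : P.A) * (q * (y : P.A)))))
        (fun p p' q => by simp [add_mul])
        (fun c p q => by simp [smul_mul_assoc])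
        (fun p q q' => by simp [add_mul, mul_add])
        (fun c p q => by simp [smul_mul_assoc, mul_smul_comm]) with hB
    have hswap := P.swap_sum (B.compl₂ P.eta.toLinearMap) P.dbas
      (fun j => P.eta (P.bas j)) P.dual_eta
    calc ∑ j, P.f ((x : P.A) * (P.bas j * (y : P.A) * P.eta (P.dbas j)))
        = ∑ i, (B.compl₂ P.eta.toLinearMap) (P.dbas i) (P.eta (P.bas i)) := by
          refine Finset.sum_congr rfl fun j _ => ?_
          simp only [hB, LinearMap.compl₂_apply, AlgEquiv.toLinearMap_apply,
            LinearMap.mk₂_apply, P.eta_invol]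
          have h1 : (x : P.A) * (P.bas j * (y : P.A) * P.eta (P.dbas j)) =
              ((x : P.A) * (P.bas j * (y : P.A))) * P.eta (P.dbas j) := by
            simp only [mul_assoc]
          rw [h1, P.f_mul_eta]
      _ = ∑ j, (B.compl₂ P.eta.toLinearMap) (P.bas j) (P.dbas j) := hswap
      _ = ∑ j, P.f (P.bas j * (x : P.A) * P.eta (P.dbas j) * (y : P.A)) := by
          refine Finset.sum_congr rfl fun j _ => ?_
          simp only [hB, LinearMap.compl₂_apply, AlgEquiv.toLinearMap_apply,
            LinearMap.mk₂_apply, mul_assoc]
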